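/- Let A_0 be the (r-1)×(r-1) symmetric matrix with [A_0]_{ii} = 1 and [A_0]_{ij} = r²/(√((r-i)²+r²)√((r-j)²+r²)) for i ≠ j. Then det(A_0) = (Σ_{k=1}^r (r!/k)²) / ∏_{k=1}^{r-1}((r-k)² + r²). -/

import Mathlib

/-! With `a_i = r - i` and `x_i = a_i² + r²`, the matrix is `diag(a_i² / x_i) + u uᵀ` for
`u_i = r / √x_i`, so the matrix determinant lemma gives
`det A₀ = (∏ a_i²) (1 + ∑ r² / a_i²) / ∏ x_i`. As `i` runs over `1, …, r - 1` so does `a_i`, and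
`((r - 1)!)² (1 + ∑_{k < r} r² / k²) = ∑_{k ≤ r} (r! / k)²`. -/

open Finset Matrix

theorem Matrix.det_diagonal_add_vecMulVec {ι K : Type*} [Fintype ι] [DecidableEq ι] [Field K]
    (d u v : ι → K) (hd : ∀ i, d i ≠ 0) :
    (diagonal d + vecMulVec u v).det = (∏ i, d i) * (1 + ∑ i, u i * v i / d i) := by
  have hfactor : diagonal d + vecMulVec u v
      = diagonal d * (1 + replicateCol Unit (fun i => u i / d i) * replicateRow Unit v) := by
    rw [← vecMulVec_eq, Matrix.mul_add, Matrix.mul_one]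
    ext i j
    simp [vecMulVec_apply, diagonal_mul, mul_div_cancel₀ _ (hd i), ← mul_assoc]
  rw [hfactor, det_mul, det_diagonal, det_one_add_replicateCol_mul_replicateRow]
  simp only [dotProduct, div_mul_eq_mul_div, mul_comm (v _)]

theorem Matrix.det_of_ite_div_sqrt_mul_sqrt {ι : Type*} [Fintype ι] [DecidableEq ι]
    (a : ι → ℝ) (b : ℝ) (ha : ∀ i, a i ≠ 0) :
    (of fun i j => if i = j then 1
      else b ^ 2 / (√(a i ^ 2 + b ^ 2) * √(a j ^ 2 + b ^ 2))).det
      = (∏ i, a i ^ 2) * (1 + ∑ i, b ^ 2 / a i ^ 2) / ∏ i, (a i ^ 2 + b ^ 2) := by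
  have hx : ∀ i, 0 < a i ^ 2 + b ^ 2 := fun i => by positivity [ha i]
  set u : ι → ℝ := fun i => b / √(a i ^ 2 + b ^ 2)
  have hu : ∀ i, u i * u i = b ^ 2 / (a i ^ 2 + b ^ 2) := fun i => by
    rw [← sq, div_pow, Real.sq_sqrt (hx i).le]
  have hrank_one : (of fun i j => if i = j then 1
      else b ^ 2 / (√(a i ^ 2 + b ^ 2) * √(a j ^ 2 + b ^ 2)))
      = diagonal (fun i => a i ^ 2 / (a i ^ 2 + b ^ 2)) + vecMulVec u u := by
    ext i j
    rcases eq_or_ne i j with rfl | hij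
    · simp [vecMulVec_apply, hu, ← add_div, div_self (hx i).ne']
    · simp [u, vecMulVec_apply, hij, div_mul_div_comm, ← sq]
  have hd : ∀ i, a i ^ 2 / (a i ^ 2 + b ^ 2) ≠ 0 := fun i => by positivity [ha i]
  rw [hrank_one, det_diagonal_add_vecMulVec _ _ _ hd, prod_div_distrib]
  have hterm : ∀ i, u i * u i / (a i ^ 2 / (a i ^ 2 + b ^ 2)) = b ^ 2 / a i ^ 2 := fun i => by
    rw [hu, div_div_div_cancel_right₀ (hx i).ne']
  simp only [hterm]
  ring

@[to_additive]
theorem Fin.prod_univ_val_add_one_eq_prod_Icc {M : Type*} [CommMonoid M] (n : ℕ) (g : ℕ → M) :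
    ∏ i : Fin n, g (i + 1) = ∏ k ∈ Icc 1 n, g k := by
  rw [Fin.prod_univ_eq_prod_range (fun i => g (i + 1)), range_eq_Ico, prod_Ico_add',
    zero_add, Ico_add_one_right_eq_Icc]

@[to_additive]
theorem Fin.prod_univ_sub_val_eq_prod_Icc {M : Type*} [CommMonoid M] (n : ℕ) (g : ℕ → M) :
    ∏ i : Fin n, g (n - i) = ∏ k ∈ Icc 1 n, g k := by
  rw [← prod_univ_val_add_one_eq_prod_Icc, ← Equiv.prod_comp Fin.revPerm]
  refine prod_congr rfl fun i _ => congrArg g ?_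
  simp only [Fin.revPerm_apply, Fin.val_rev]
  omega

theorem prod_sq_mul_one_add_sum_div_sq {K : Type*} [Field K] [CharZero K] (n : ℕ) :
    (∏ k ∈ Icc 1 n, (k : K) ^ 2) * (1 + ∑ k ∈ Icc 1 n, ((n + 1 : ℕ) : K) ^ 2 / (k : K) ^ 2)
      = ∑ k ∈ Icc 1 (n + 1), (((n + 1).factorial : K) / k) ^ 2 := by
  have hprod : ∏ k ∈ Icc 1 n, (k : K) ^ 2 = (n.factorial : K) ^ 2 := by
    rw [prod_pow, ← Nat.cast_prod, ← Ico_add_one_right_eq_Icc, prod_Ico_id_eq_factorial]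
  rw [hprod, sum_Icc_succ_top (by omega), Nat.factorial_succ, mul_add, mul_one, mul_sum, add_comm]
  have hn : (n : K) + 1 ≠ 0 := Nat.cast_add_one_ne_zero n
  push_cast
  congr 1
  · refine sum_congr rfl fun k hk => ?_
    have hk : (k : K) ≠ 0 := Nat.cast_ne_zero.2 (by grind)
    field_simp
  · field_simp

/-- Let `A₀` be the `(r-1)×(r-1)` symmetric matrix with `[A₀]ᵢᵢ = 1` and
`[A₀]ᵢⱼ = r²/(√((r-i)²+r²)√((r-j)²+r²))` for `i ≠ j`. Then
`det A₀ = (∑_{k=1}^r (r!/k)²) / ∏_{k=1}^{r-1}((r-k)² + r²)`. -/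
theorem stmt_13 (r : ℕ) (hr : 2 ≤ r) :
    Matrix.det (Matrix.of fun i j : Fin (r - 1) =>
      if i = j then (1 : ℝ)
      else (r : ℝ) ^ 2
        / (Real.sqrt (((r : ℝ) - ((i : ℕ) + 1)) ^ 2 + (r : ℝ) ^ 2)
          * Real.sqrt (((r : ℝ) - ((j : ℕ) + 1)) ^ 2 + (r : ℝ) ^ 2)))
      = (∑ k ∈ Finset.Icc 1 r, ((Nat.factorial r : ℝ) / (k : ℝ)) ^ 2)
        / ∏ k ∈ Finset.Icc 1 (r - 1), (((r : ℝ) - (k : ℝ)) ^ 2 + (r : ℝ) ^ 2) := by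
  obtain ⟨n, rfl⟩ : ∃ n, r = n + 1 := ⟨r - 1, by omega⟩
  rw [Nat.add_sub_cancel]
  have hreflect : ∀ i : Fin n, ((n + 1 : ℕ) : ℝ) - ((i : ℕ) + 1) = ((n - i : ℕ) : ℝ) := fun i => by
    rw [Nat.cast_sub i.isLt.le]
    push_cast
    ring
  have ha : ∀ i : Fin n, ((n + 1 : ℕ) : ℝ) - ((i : ℕ) + 1) ≠ 0 := fun i => by
    rw [hreflect]
    exact Nat.cast_ne_zero.2 (Nat.sub_ne_zero_of_lt i.isLt)
  rw [det_of_ite_div_sqrt_mul_sqrt _ _ ha]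
  congr 1
  · simp only [hreflect]
    rw [Fin.prod_univ_sub_val_eq_prod_Icc n (fun k => (k : ℝ) ^ 2),
      Fin.sum_univ_sub_val_eq_sum_Icc n (fun k => ((n + 1 : ℕ) : ℝ) ^ 2 / (k : ℝ) ^ 2)]
    exact prod_sq_mul_one_add_sum_div_sq n
  · simpa using Fin.prod_univ_val_add_one_eq_prod_Icc n
      (fun k => (((n + 1 : ℕ) : ℝ) - k) ^ 2 + ((n + 1 : ℕ) : ℝ) ^ 2)
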